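/- arXiv:1407.5950 — 2 statements merged into one kernel-verified Lean document; each statement's English description precedes it below -/
import Mathlib

section
/- For ℓ ≥ 1, λ < λ₁, let θ(t) = 1+(λ₁-λ)|t|² and Ψ(t) = exp(-√θ(t))·|t|^{-(ℓ-1)/2} for t ∈ ℝ^ℓ \ {0}. Then -ΔΨ + (λ₁-λ)Ψ = Ψ·((λ₁-λ)θ^{-1} + (λ₁-λ)θ^{-3/2} + ((ℓ-1)/2)((ℓ-3)/2)|t|^{-2}). -/
/-!
Write `s = ‖t‖²`, `μ = λ₁ - λ`, `p = -(ℓ - 1)/4`. Away from the origin `Ψ = exp ∘ h ∘ ‖·‖²`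
with `h s = logProfile μ p s = -(1 + μ s)^{1/2} + p log s`. For a function of `‖t‖²` the
Laplacian is `4 s f'' + 2 ℓ f'`, so for `exp ∘ h` it is `exp h · (4 s (h'' + h'²) + 2 ℓ h')`,
and the identity reduces to an algebraic one in `s` and `r = (1 + μ s)^{1/2}`, closed by
`μ s = r² - 1`.
-/

noncomputable def laplacian {ℓ : ℕ} (f : EuclideanSpace ℝ (Fin ℓ) → ℝ)
    (t : EuclideanSpace ℝ (Fin ℓ)) : ℝ :=
  ∑ i, fderiv ℝ (fun x => fderiv ℝ f x (EuclideanSpace.single i 1)) t (EuclideanSpace.single i 1)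

open Real Filter Topology

section Laplacian

variable {ℓ : ℕ}

theorem laplacian_congr_of_eventuallyEq {f g : EuclideanSpace ℝ (Fin ℓ) → ℝ}
    {t : EuclideanSpace ℝ (Fin ℓ)} (h : f =ᶠ[𝓝 t] g) : laplacian f t = laplacian g t := by
  refine Finset.sum_congr rfl fun i _ => ?_
  have hpartial : (fun x => fderiv ℝ f x (EuclideanSpace.single i 1))
      =ᶠ[𝓝 t] fun x => fderiv ℝ g x (EuclideanSpace.single i 1) :=
    (h.fderiv (𝕜 := ℝ)).mono fun x hx => by simp only [hx]
  rw [hpartial.fderiv_eq]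

theorem hasFDerivAt_comp_norm_sq {f : ℝ → ℝ} {f' : ℝ}
    {x : EuclideanSpace ℝ (Fin ℓ)} (hf : HasDerivAt f f' (‖x‖ ^ 2)) :
    HasFDerivAt (fun x => f (‖x‖ ^ 2)) (f' • (2 • innerSL ℝ x)) x :=
  hf.comp_hasFDerivAt x (hasStrictFDerivAt_norm_sq x).hasFDerivAt

theorem laplacian_comp_norm_sq {f f' f'' : ℝ → ℝ}
    (hf : ∀ s, 0 < s → HasDerivAt f (f' s) s) (hf' : ∀ s, 0 < s → HasDerivAt f' (f'' s) s)
    {t : EuclideanSpace ℝ (Fin ℓ)} (ht : t ≠ 0) :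
    laplacian (fun x => f (‖x‖ ^ 2)) t
      = 4 * ‖t‖ ^ 2 * f'' (‖t‖ ^ 2) + 2 * ℓ * f' (‖t‖ ^ 2) := by
  have partial_eq : ∀ i, fderiv ℝ (fun x => fderiv ℝ (fun x => f (‖x‖ ^ 2)) x
        (EuclideanSpace.single i 1)) t (EuclideanSpace.single i 1)
      = 4 * f'' (‖t‖ ^ 2) * (t i * t i) + 2 * f' (‖t‖ ^ 2) := by
    intro i
    have first_partial : (fun x => fderiv ℝ (fun x => f (‖x‖ ^ 2)) x (EuclideanSpace.single i 1))
        =ᶠ[𝓝 t] fun x => f' (‖x‖ ^ 2) * (2 * x i) := by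
      filter_upwards [isOpen_ne.mem_nhds ht] with x hx
      rw [(hasFDerivAt_comp_norm_sq (hf _ (by positivity))).fderiv]
      simp [EuclideanSpace.inner_single_right]
    have hcoord : HasFDerivAt (fun x : EuclideanSpace ℝ (Fin ℓ) => 2 * x i)
        ((2 : ℝ) • (EuclideanSpace.proj i : EuclideanSpace ℝ (Fin ℓ) →L[ℝ] ℝ)) t :=
      (EuclideanSpace.proj i : EuclideanSpace ℝ (Fin ℓ) →L[ℝ] ℝ).hasFDerivAt.const_mul 2
    have hsecond : HasFDerivAt (fun x => f' (‖x‖ ^ 2) * (2 * x i)) _ t :=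
      (hasFDerivAt_comp_norm_sq (hf' _ (by positivity))).mul hcoord
    rw [first_partial.fderiv_eq, hsecond.fderiv]
    simp [EuclideanSpace.inner_single_right]
    ring
  have hsum : ∑ i, t i * t i = ‖t‖ ^ 2 := by
    simp only [EuclideanSpace.real_norm_sq_eq t, sq]
  simp only [laplacian, partial_eq, Finset.sum_add_distrib, ← Finset.mul_sum, hsum,
    Finset.sum_const, Finset.card_univ, Fintype.card_fin, nsmul_eq_mul]
  ring

theorem laplacian_exp_comp_norm_sq {h h' h'' : ℝ → ℝ}
    (hh : ∀ s, 0 < s → HasDerivAt h (h' s) s) (hh' : ∀ s, 0 < s → HasDerivAt h' (h'' s) s)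
    {t : EuclideanSpace ℝ (Fin ℓ)} (ht : t ≠ 0) :
    laplacian (fun x => exp (h (‖x‖ ^ 2))) t
      = exp (h (‖t‖ ^ 2)) * (4 * ‖t‖ ^ 2 * (h'' (‖t‖ ^ 2) + h' (‖t‖ ^ 2) ^ 2)
          + 2 * ℓ * h' (‖t‖ ^ 2)) := by
  rw [laplacian_comp_norm_sq (f' := fun s => exp (h s) * h' s)
    (f'' := fun s => exp (h s) * h' s * h' s + exp (h s) * h'' s)
    (fun s hs => (hh s hs).exp) (fun s hs => (hh s hs).exp.mul (hh' s hs)) ht]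
  ring

end Laplacian

section Profile

variable {μ p s : ℝ}

noncomputable def logProfile (μ p s : ℝ) : ℝ := -(1 + μ * s) ^ (1 / 2 : ℝ) + p * log s

noncomputable def logProfile' (μ p s : ℝ) : ℝ := -(μ / 2) * (1 + μ * s) ^ (-1 / 2 : ℝ) + p * s⁻¹

noncomputable def logProfile'' (μ p s : ℝ) : ℝ :=
  μ ^ 2 / 4 * (1 + μ * s) ^ (-3 / 2 : ℝ) - p * (s ^ 2)⁻¹

theorem hasDerivAt_one_add_mul (μ s : ℝ) : HasDerivAt (fun s => 1 + μ * s) μ s := by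
  simpa using ((hasDerivAt_id s).const_mul μ).const_add 1

theorem hasDerivAt_logProfile (hμ : 0 ≤ μ) (hs : 0 < s) :
    HasDerivAt (logProfile μ p) (logProfile' μ p s) s := by
  refine (((hasDerivAt_one_add_mul μ s).rpow_const (p := 1 / 2) (Or.inl (by positivity))).neg.add
    ((hasDerivAt_log hs.ne').const_mul p)).congr_deriv ?_
  rw [logProfile', show (1 / 2 : ℝ) - 1 = -1 / 2 by norm_num]
  ring

theorem hasDerivAt_logProfile' (hμ : 0 ≤ μ) (hs : 0 < s) :
    HasDerivAt (logProfile' μ p) (logProfile'' μ p s) s := by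
  refine ((((hasDerivAt_one_add_mul μ s).rpow_const (p := -1 / 2)
    (Or.inl (by positivity))).const_mul (-(μ / 2))).add
    ((hasDerivAt_inv hs.ne').const_mul p)).congr_deriv ?_
  rw [logProfile'', show (-1 / 2 : ℝ) - 1 = -3 / 2 by norm_num]
  ring

theorem logProfile_identity {L : ℝ} (hp : 4 * p = 1 - L) (hμ : 0 ≤ μ) (hs : 0 < s) :
    -(4 * s * (logProfile'' μ p s + logProfile' μ p s ^ 2) + 2 * L * logProfile' μ p s) + μ
      = μ * (1 + μ * s)⁻¹ + μ * (1 + μ * s) ^ (-3 / 2 : ℝ)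
          + (L - 1) / 2 * ((L - 3) / 2) * s⁻¹ := by
  have hu : 0 < 1 + μ * s := by positivity
  obtain ⟨r, hr0, hr2⟩ : ∃ r : ℝ, 0 < r ∧ r ^ 2 = 1 + μ * s :=
    ⟨√(1 + μ * s), by positivity, sq_sqrt hu.le⟩
  have hpow : ∀ a : ℝ, (1 + μ * s) ^ a = r ^ (2 * a) := fun a => by
    rw [← hr2, ← rpow_natCast, ← rpow_mul hr0.le]; norm_num
  obtain rfl : L = 1 - 4 * p := by linarith
  rw [logProfile', logProfile'', hpow, hpow (-1 / 2), ← hr2]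
  norm_num [rpow_neg hr0.le]
  field_simp
  linear_combination (4 * μ * s * (1 + r)) * hr2

end Profile

theorem stmt_4_general {ℓ : ℕ} (lam lam₁ : ℝ) (hlt : lam < lam₁)
    (θ : EuclideanSpace ℝ (Fin ℓ) → ℝ) (hθ : ∀ t, θ t = 1 + (lam₁ - lam) * ‖t‖ ^ 2)
    (Ψ : EuclideanSpace ℝ (Fin ℓ) → ℝ)
    (hΨ : ∀ t, Ψ t = Real.exp (-Real.sqrt (θ t)) * ‖t‖ ^ (-(((ℓ : ℝ) - 1) / 2))) :
    ∀ t, t ≠ 0 →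
      -laplacian Ψ t + (lam₁ - lam) * Ψ t =
        Ψ t * ((lam₁ - lam) * (θ t)⁻¹ + (lam₁ - lam) * (θ t) ^ (-(3 : ℝ) / 2) +
          (((ℓ : ℝ) - 1) / 2) * (((ℓ : ℝ) - 3) / 2) * (‖t‖ ^ 2)⁻¹) := by
  intro t ht
  set μ := lam₁ - lam
  have hμ : 0 ≤ μ := by linarith
  have hΨ_exp : ∀ x, x ≠ 0 → Ψ x = exp (logProfile μ (-(((ℓ : ℝ) - 1) / 4)) (‖x‖ ^ 2)) :=
    fun x hx => by
      rw [hΨ, hθ, logProfile, sqrt_eq_rpow, exp_add, rpow_def_of_pos (norm_pos_iff.mpr hx),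
        log_pow]
      ring_nf
  rw [laplacian_congr_of_eventuallyEq ((isOpen_ne.eventually_mem ht).mono hΨ_exp),
    laplacian_exp_comp_norm_sq (fun s hs => hasDerivAt_logProfile hμ hs)
      (fun s hs => hasDerivAt_logProfile' hμ hs) ht,
    hΨ_exp t ht, hθ,
    ← logProfile_identity (p := -(((ℓ : ℝ) - 1) / 4)) (by ring) hμ (by positivity)]
  ring

theorem stmt_4 {ℓ : ℕ} (hℓ : 1 ≤ ℓ) (lam lam₁ : ℝ) (hlt : lam < lam₁)
    (θ : EuclideanSpace ℝ (Fin ℓ) → ℝ) (hθ : ∀ t, θ t = 1 + (lam₁ - lam) * ‖t‖ ^ 2)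
    (Ψ : EuclideanSpace ℝ (Fin ℓ) → ℝ)
    (hΨ : ∀ t, Ψ t = Real.exp (-Real.sqrt (θ t)) * ‖t‖ ^ (-(((ℓ : ℝ) - 1) / 2))) :
    ∀ t, t ≠ 0 →
      -laplacian Ψ t + (lam₁ - lam) * Ψ t =
        Ψ t * ((lam₁ - lam) * (θ t)⁻¹ + (lam₁ - lam) * (θ t) ^ (-(3 : ℝ) / 2) +
          (((ℓ : ℝ) - 1) / 2) * (((ℓ : ℝ) - 3) / 2) * (‖t‖ ^ 2)⁻¹) :=
  stmt_4_general lam lam₁ hlt θ hθ Ψ hΨ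
end

section
/- Let p > q > 2 and let a_n, b_n, c_n be sequences of positive reals with liminf a_n > 0, liminf b_n > 0, and b_n, c_n bounded, such that a_n - b_n - c_n → 0. For each n let t_n > 0 be defined by t_n^{p-2} b_n + t_n^{q-2} c_n = a_n. Then (t_n) is bounded and t_n → 1. -/
open Filter

theorem stmt_15 (p q : ℝ) (hq : 2 < q) (hpq : q < p) (a b c t : ℕ → ℝ)
    (hapos : ∀ n, 0 < a n) (hbpos : ∀ n, 0 < b n) (hcpos : ∀ n, 0 < c n)
    (hainf : 0 < Filter.liminf a Filter.atTop) (hbinf : 0 < Filter.liminf b Filter.atTop)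
    (hbbd : ∃ Cb, ∀ n, b n ≤ Cb) (hcbd : ∃ Cc, ∀ n, c n ≤ Cc)
    (hlim : Tendsto (fun n => a n - b n - c n) atTop (nhds 0))
    (htpos : ∀ n, 0 < t n)
    (ht : ∀ n, (t n) ^ (p - 2) * b n + (t n) ^ (q - 2) * c n = a n) :
    (∃ Ct, ∀ n, t n ≤ Ct) ∧ Tendsto t atTop (nhds 1) := by
  have hp2 : (0:ℝ) < p - 2 := by linarith
  have hq2 : (0:ℝ) < q - 2 := by linarith
  set L := Filter.liminf b Filter.atTop with hL
  have hβ : 0 < L / 2 := by linarith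
  have hev : ∀ᶠ n in atTop, L / 2 < b n := by
    apply Filter.eventually_lt_of_lt_liminf
    · linarith
    · exact Filter.isBoundedUnder_of ⟨0, fun n => (hbpos n).le⟩
  have htend : Tendsto t atTop (nhds 1) := by
    rw [Metric.tendsto_atTop]
    intro ε hε
    set ε' := min ε 1 with hε'def
    have hε'pos : 0 < ε' := lt_min hε one_pos
    have hε'le1 : ε' ≤ 1 := min_le_right _ _
    have hε'le : ε' ≤ ε := min_le_left _ _
    have h1 : 1 < (1+ε')^(p-2) := by
      rw [Real.one_lt_rpow_iff_of_pos (by linarith)]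
      left; exact ⟨by linarith, hp2⟩
    have h2 : (1-ε')^(p-2) < 1 := Real.rpow_lt_one (by linarith) (by linarith) hp2
    set δ := min (((1+ε')^(p-2) - 1) * (L/2)) (-(((1-ε')^(p-2) - 1) * (L/2))) with hδdef
    have hδpos : 0 < δ := lt_min (by nlinarith) (by nlinarith)
    have hδ1 : δ ≤ ((1+ε')^(p-2) - 1) * (L/2) := min_le_left _ _
    have hδ2 : δ ≤ -(((1-ε')^(p-2) - 1) * (L/2)) := min_le_right _ _
    rw [Metric.tendsto_atTop] at hlim
    obtain ⟨N1, hN1⟩ := hlim δ hδpos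
    obtain ⟨N2, hN2⟩ := Filter.eventually_atTop.mp hev
    refine ⟨max N1 N2, fun n hn => ?_⟩
    have hD : |a n - b n - c n| < δ := by
      have := hN1 n (le_trans (le_max_left _ _) hn)
      simpa [Real.dist_eq] using this
    have hb : L / 2 < b n := hN2 n (le_trans (le_max_right _ _) hn)
    rw [Real.dist_eq]
    by_contra hcon
    push_neg at hcon
    have hcon' : ε' ≤ |t n - 1| := le_trans hε'le hcon
    obtain ⟨hDl, hDr⟩ := abs_lt.mp hD
    rcases le_abs.mp hcon' with hcase | hcase
    · -- t n ≥ 1 + ε'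
      have htn : 1 + ε' ≤ t n := by linarith
      have hA : (1+ε')^(p-2) ≤ (t n)^(p-2) :=
        Real.rpow_le_rpow (by linarith) htn hp2.le
      have hB : (1:ℝ) ≤ (t n)^(q-2) := by
        have := Real.rpow_le_rpow (by norm_num) (by linarith : (1:ℝ) ≤ t n) hq2.le
        simpa [Real.one_rpow] using this
      have key : a n - b n - c n =
          ((t n)^(p-2) - 1) * b n + ((t n)^(q-2) - 1) * c n := by
        rw [← ht n]; ring
      have e1 : ((1+ε')^(p-2) - 1) * (L/2) ≤ ((t n)^(p-2) - 1) * b n :=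
        mul_le_mul (by linarith) hb.le hβ.le (by linarith)
      have e2 : (0:ℝ) ≤ ((t n)^(q-2) - 1) * c n :=
        mul_nonneg (by linarith) (hcpos n).le
      linarith
    · -- t n ≤ 1 - ε'
      have htn : t n ≤ 1 - ε' := by linarith
      have hA : (t n)^(p-2) ≤ (1-ε')^(p-2) :=
        Real.rpow_le_rpow (htpos n).le htn hp2.le
      have hB : (t n)^(q-2) ≤ 1 :=
        Real.rpow_le_one (htpos n).le (by linarith [htpos n]) hq2.le
      have key : a n - b n - c n =
          ((t n)^(p-2) - 1) * b n + ((t n)^(q-2) - 1) * c n := by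
        rw [← ht n]; ring
      have e1 : ((t n)^(p-2) - 1) * b n ≤ ((1-ε')^(p-2) - 1) * (L/2) := by
        have hneg : (t n)^(p-2) - 1 ≤ (1-ε')^(p-2) - 1 := by linarith
        calc ((t n)^(p-2) - 1) * b n ≤ ((1-ε')^(p-2) - 1) * b n :=
              mul_le_mul_of_nonneg_right hneg (hbpos n).le
          _ ≤ ((1-ε')^(p-2) - 1) * (L/2) :=
              mul_le_mul_of_nonpos_left hb.le (by linarith)
      have e2 : ((t n)^(q-2) - 1) * c n ≤ 0 :=
        mul_nonpos_of_nonpos_of_nonneg (by linarith) (hcpos n).le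
      linarith
  refine ⟨?_, htend⟩
  obtain ⟨C, hC⟩ := htend.bddAbove_range
  exact ⟨C, fun n => hC ⟨n, rfl⟩⟩
end
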